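/- For the isosceles triangle of unit inradius minimizing u+v, with w = √(8+4√5) and v = (w²+4)w/(2(w²-4)), the apex angle θ defined by cos(θ) = 1 - w²/(2v²) satisfies cos(θ) = √5 - 2 = 1/φ³, where φ = (1+√5)/2. -/

import Mathlib

/-!
Substituting `v` gives `w² / (2v²) = 2t²` with `t = (w² - 4) / (w² + 4)`, so `1 - w² / (2v²)` is the
double-angle expression `1 - 2t²`. Since `w² = 8 + 4√5 = 4φ³`, and `φ³ - 1 = 2φ`, `φ³ + 1 = 2φ²`,
one gets `t = φ⁻¹`, and `1 - 2φ⁻² = φ⁻³ = √5 - 2` follows from `φ² = φ + 1`.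
-/

open Real

lemma goldenRatio_pow_three : goldenRatio ^ 3 = 2 + √5 := by
  have h5 : √5 ^ 2 = 5 := sq_sqrt (by norm_num)
  unfold goldenRatio
  linear_combination (3 + √5) / 8 * h5

lemma sqrt_five_sub_two_eq_inv_goldenRatio_pow_three : √5 - 2 = (goldenRatio ^ 3)⁻¹ := by
  have h5 : √5 ^ 2 = 5 := sq_sqrt (by norm_num)
  rw [goldenRatio_pow_three]
  exact eq_inv_of_mul_eq_one_left (by linear_combination h5)

lemma sq_sqrt_eight_add_four_sqrt_five : √(8 + 4 * √5) ^ 2 = 4 * goldenRatio ^ 3 := by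
  rw [sq_sqrt (by positivity), goldenRatio_pow_three]
  ring

lemma one_sub_two_mul_inv_sq_of_sq_eq_add_one {K : Type*} [Field K] {x : K}
    (hx : x ^ 2 = x + 1) : 1 - 2 * x⁻¹ ^ 2 = (x ^ 3)⁻¹ := by
  have hx0 : x ≠ 0 := by rintro rfl; norm_num at hx
  field_simp
  linear_combination (x + 1) * hx

lemma four_mul_pow_three_sub_four_div_of_sq_eq_add_one {x : ℝ} (hx : x ^ 2 = x + 1)
    (hpos : 0 < x) : (4 * x ^ 3 - 4) / (4 * x ^ 3 + 4) = x⁻¹ := by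
  field_simp
  linear_combination (x ^ 2 + 1) * hx

lemma sq_div_two_mul_sq_eq {w v : ℝ} (hw : w ≠ 0)
    (hv : v = (w ^ 2 + 4) * w / (2 * (w ^ 2 - 4))) :
    w ^ 2 / (2 * v ^ 2) = 2 * ((w ^ 2 - 4) / (w ^ 2 + 4)) ^ 2 := by
  subst hv
  rcases eq_or_ne (w ^ 2 - 4) 0 with h | h
  · simp [h] -- `v = 0` by division by zero, and both sides vanish
  · field_simp

theorem stmt_19 (w v φ : ℝ)
    (hw : w = Real.sqrt (8 + 4 * Real.sqrt 5))
    (hv : v = (w ^ 2 + 4) * w / (2 * (w ^ 2 - 4)))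
    (hφ : φ = (1 + Real.sqrt 5) / 2) :
    1 - w ^ 2 / (2 * v ^ 2) = Real.sqrt 5 - 2 ∧
      (Real.sqrt 5 - 2) * φ ^ 3 = 1 := by
  have hw0 : w ≠ 0 := by rw [hw]; positivity
  have hw2 : w ^ 2 = 4 * goldenRatio ^ 3 := hw ▸ sq_sqrt_eight_add_four_sqrt_five
  constructor
  · rw [sq_div_two_mul_sq_eq hw0 hv, hw2,
      four_mul_pow_three_sub_four_div_of_sq_eq_add_one goldenRatio_sq goldenRatio_pos,
      one_sub_two_mul_inv_sq_of_sq_eq_add_one goldenRatio_sq,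
      sqrt_five_sub_two_eq_inv_goldenRatio_pow_three]
  · rw [sqrt_five_sub_two_eq_inv_goldenRatio_pow_three, hφ]
    exact inv_mul_cancel₀ (by positivity)
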